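/- arXiv:2101.03021 — 9 statements merged into one kernel-verified Lean document; each statement's English description precedes it below -/
import Mathlib

section
/- For every compact set K ⊂ ℂ and every ε with 0 < ε < 1, there exists N ∈ ℕ such that for all integers m ≥ n > N, all s ∈ K, and all z ∈ ℂ with |z| ≤ 1, one has |Φ_{n,m}(s,z)| < ε. -/
open Filter

/-- `PhiNest s z n k` is the finite composition
`exp(s - n + exp(s - (n+1) + ⋯ + exp(s - (n+k) + z)⋯))`,
i.e. `Φ_{n, n+k}(s, z)` in the paper's notation. -/
noncomputable def PhiNest (s z : ℂ) : ℕ → ℕ → ℂ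
  | n, 0 => Complex.exp (s - (n : ℂ) + z)
  | n, k + 1 => Complex.exp (s - (n : ℂ) + PhiNest s z (n + 1) k)

/-- `PhiComp s z n m = Φ_{n,m}(s,z)`, the composition of
`z ↦ exp(s - j + z)` for `j = n, …, m` (for `n ≤ m`). -/
noncomputable def PhiComp (s z : ℂ) (n m : ℕ) : ℂ :=
  PhiNest s z n (m - n)

/-! Once `Re s ≤ C` and `exp (C + 1 - n) < ε ≤ 1`, every map `w ↦ exp (s - j + w)` with `j ≥ n`
sends the closed unit disc into the disc of radius `ε`, hence into itself; so the whole composition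
`Φ_{n,m}(s, ·)` does too, and `n` can be chosen uniformly on a compact set of `s`. -/

theorem norm_exp_sub_natCast_add_lt {s w : ℂ} {C ε : ℝ} {n : ℕ} (hs : s.re ≤ C) (hw : ‖w‖ ≤ 1)
    (hn : Real.exp (C + 1 - n) < ε) : ‖Complex.exp (s - n + w)‖ < ε := by
  have hw_re : w.re ≤ 1 := (Complex.re_le_norm w).trans hw
  calc ‖Complex.exp (s - n + w)‖ = Real.exp (s.re - n + w.re) := by simp [Complex.norm_exp]
    _ ≤ Real.exp (C + 1 - n) := Real.exp_le_exp.2 (by linarith)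
    _ < ε := hn

theorem norm_phiNest_lt {s z : ℂ} {C ε : ℝ} (hε : ε ≤ 1) (hs : s.re ≤ C) (hz : ‖z‖ ≤ 1)
    (k : ℕ) {n : ℕ} (hn : Real.exp (C + 1 - n) < ε) : ‖PhiNest s z n k‖ < ε := by
  induction k generalizing n with
  | zero => exact norm_exp_sub_natCast_add_lt hs hz hn
  | succ k ih =>
    have hn' : Real.exp (C + 1 - ↑(n + 1)) < ε :=
      lt_of_le_of_lt (Real.exp_le_exp.2 (by push_cast; linarith)) hn
    exact norm_exp_sub_natCast_add_lt hs ((ih hn').le.trans hε) hn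

theorem phiComp_tail_small (K : Set ℂ) (hK : IsCompact K)
    (ε : ℝ) (hε0 : 0 < ε) (hε1 : ε < 1) :
    ∃ N : ℕ, ∀ m n : ℕ, n ≤ m → N < n → ∀ s ∈ K, ∀ z : ℂ,
      ‖z‖ ≤ 1 → ‖PhiComp s z n m‖ < ε := by
  obtain ⟨C, hC⟩ := (hK.image Complex.continuous_re).bddAbove
  refine ⟨⌈C + 1 - Real.log ε⌉₊, fun m n _ hNn s hs z hz => ?_⟩
  have hn : Real.exp (C + 1 - n) < ε := by
    have hN : C + 1 - Real.log ε < n :=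
      (Nat.le_ceil _).trans_lt (by exact_mod_cast hNn)
    rw [← Real.exp_log hε0]
    exact Real.exp_lt_exp.2 (by linarith)
  exact norm_phiNest_lt hε1.le (hC ⟨s, hs, rfl⟩) hz (m - n) hn
end

section
/- The sequence of entire functions φ_m(s) = Φ_{1,m}(s,0), i.e. the nested exponentials exp(s−1+exp(s−2+···+exp(s−m)···)), converges uniformly on every compact subset of ℂ as m → ∞; the limit φ : ℂ → ℂ is an entire function satisfying exp(s + φ(s)) = φ(s+1) for all s ∈ ℂ. -/
open Filter

/-- `phiSeq m s = φ_m(s) = Φ_{1,m}(s,0) = exp(s-1+exp(s-2+⋯+exp(s-m)⋯))`. -/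
noncomputable def phiSeq (m : ℕ) (s : ℂ) : ℂ :=
  PhiComp s 0 1 m

/-!
Fix `‖s‖ ≤ R`. If `b n ≥ exp (R - n + b (n + 1))` for all `n`, then `|Φ_{n,m}(s,z)| ≤ b n`
whenever `|z| ≤ b (m + 1)`, because `|exp w| = exp (Re w)`. Along the nest each `exp` is then
Lipschitz with constant `b j` in its argument, so `z ↦ Φ_{1,m}(s,z)` is Lipschitz with constant
`∏_{j ≤ m} b j`. For integer radius `N` the real tower cut off to `1` above level `N` is such a
`b`, and its products are bounded independently of `m`. Since
`φ_{m+1}(s) = Φ_{1,m}(s, e^{s-m-1})`, the increments `φ_{m+1} - φ_m` are `O(e^{-m})` uniformly on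
`‖s‖ ≤ N`, and the Weierstrass M-test gives locally uniform convergence. The limit is entire by
Weierstrass' theorem, and the identity `φ_{m+1}(s + 1) = exp (s + φ_m(s))` passes to the limit.
-/

theorem Complex.norm_exp_sub_exp_le {a b : ℂ} {c : ℝ} (ha : a.re ≤ c) (hb : b.re ≤ c) :
    ‖Complex.exp a - Complex.exp b‖ ≤ Real.exp c * ‖a - b‖ :=
  (convex_halfSpace_re_le c).norm_image_sub_le_of_norm_hasDerivWithin_le
    (fun x _ => (Complex.hasDerivAt_exp x).hasDerivWithinAt)
    (fun x hx => by rw [Complex.norm_exp]; exact Real.exp_le_exp.2 hx) hb ha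

theorem re_sub_natCast_add_le {s : ℂ} {R : ℝ} (hs : ‖s‖ ≤ R) (n : ℕ) (w : ℂ) :
    (s - n + w).re ≤ R - n + ‖w‖ := by
  have := Complex.re_le_norm s
  have := Complex.re_le_norm w
  simp only [Complex.add_re, Complex.sub_re, Complex.natCast_re]
  linarith

theorem PhiNest_succ_eq_inner (s z : ℂ) (n k : ℕ) :
    PhiNest s z n (k + 1) = PhiNest s (Complex.exp (s - (n + k + 1 : ℕ) + z)) n k := by
  induction k generalizing n with
  | zero => rfl
  | succ k ih =>
    rw [PhiNest, ih (n + 1), PhiNest, show n + 1 + k + 1 = n + (k + 1) + 1 by omega]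

theorem PhiNest_shift (s z : ℂ) (n k : ℕ) : PhiNest (s + 1) z (n + 1) k = PhiNest s z n k := by
  induction k generalizing n with
  | zero => simp only [PhiNest, Nat.cast_succ, add_sub_add_right_eq_sub]
  | succ k ih => simp only [PhiNest, ih, Nat.cast_succ, add_sub_add_right_eq_sub]

theorem differentiable_PhiNest (z : ℂ) (n k : ℕ) :
    Differentiable ℂ fun s => PhiNest s z n k := by
  induction k generalizing n with
  | zero => exact Complex.differentiable_exp.comp ((differentiable_id.sub_const _).add_const z)
  | succ k ih => exact Complex.differentiable_exp.comp ((differentiable_id.sub_const _).add (ih _))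

def TowerMajorant (R : ℝ) (b : ℕ → ℝ) : Prop :=
  ∀ n : ℕ, Real.exp (R - n + b (n + 1)) ≤ b n

namespace TowerMajorant

variable {R : ℝ} {b : ℕ → ℝ} {s : ℂ}

theorem nonneg (hb : TowerMajorant R b) (n : ℕ) : 0 ≤ b n :=
  (Real.exp_pos _).le.trans (hb n)

theorem norm_exp_le (hb : TowerMajorant R b) (hs : ‖s‖ ≤ R) {n : ℕ} {w : ℂ}
    (hw : ‖w‖ ≤ b (n + 1)) : ‖Complex.exp (s - n + w)‖ ≤ b n := by
  rw [Complex.norm_exp]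
  exact (Real.exp_le_exp.2 ((re_sub_natCast_add_le hs n w).trans (by linarith))).trans (hb n)

theorem norm_exp_sub_exp_le (hb : TowerMajorant R b) (hs : ‖s‖ ≤ R) {n : ℕ} {w w' : ℂ}
    (hw : ‖w‖ ≤ b (n + 1)) (hw' : ‖w'‖ ≤ b (n + 1)) :
    ‖Complex.exp (s - n + w) - Complex.exp (s - n + w')‖ ≤ b n * ‖w - w'‖ := by
  have h := Complex.norm_exp_sub_exp_le (c := R - n + b (n + 1))
    ((re_sub_natCast_add_le hs n w).trans (by linarith))
    ((re_sub_natCast_add_le hs n w').trans (by linarith))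
  rw [add_sub_add_left_eq_sub] at h
  exact h.trans (mul_le_mul_of_nonneg_right (hb n) (norm_nonneg _))

theorem norm_PhiNest_le (hb : TowerMajorant R b) (hs : ‖s‖ ≤ R) {z : ℂ} {n k : ℕ}
    (hz : ‖z‖ ≤ b (n + k + 1)) : ‖PhiNest s z n k‖ ≤ b n := by
  induction k generalizing n with
  | zero => exact hb.norm_exp_le hs hz
  | succ k ih =>
    exact hb.norm_exp_le hs (ih (by rwa [show n + 1 + k + 1 = n + (k + 1) + 1 by omega]))

theorem norm_PhiNest_sub_le (hb : TowerMajorant R b) (hs : ‖s‖ ≤ R) {z z' : ℂ} {n k : ℕ}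
    (hz : ‖z‖ ≤ b (n + k + 1)) (hz' : ‖z'‖ ≤ b (n + k + 1)) :
    ‖PhiNest s z n k - PhiNest s z' n k‖ ≤
      (∏ j ∈ Finset.Ico n (n + k + 1), b j) * ‖z - z'‖ := by
  induction k generalizing n with
  | zero => simpa [PhiNest] using hb.norm_exp_sub_exp_le hs hz hz'
  | succ k ih =>
    have hm : n + (k + 1) + 1 = n + 1 + k + 1 := by omega
    rw [hm] at hz hz'
    rw [hm, Finset.prod_eq_prod_Ico_succ_bot (by omega), mul_assoc]
    exact (hb.norm_exp_sub_exp_le hs (hb.norm_PhiNest_le hs hz) (hb.norm_PhiNest_le hs hz')).trans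
      (mul_le_mul_of_nonneg_left (ih hz hz') (hb.nonneg n))

end TowerMajorant

noncomputable def towerBound (N n : ℕ) : ℝ :=
  if n ≤ N then Real.exp ((N : ℝ) - n + towerBound N (n + 1)) else 1
termination_by N + 1 - n

theorem one_le_towerBound (N n : ℕ) : 1 ≤ towerBound N n := by
  fun_induction towerBound N n with
  | case1 n hn ih =>
    have : (n : ℝ) ≤ N := by exact_mod_cast hn
    exact Real.one_le_exp (by linarith)
  | case2 => exact le_rfl

theorem towerBound_of_le {N n : ℕ} (h : n ≤ N) :
    towerBound N n = Real.exp ((N : ℝ) - n + towerBound N (n + 1)) := by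
  rw [towerBound, if_pos h]

theorem towerBound_of_lt {N n : ℕ} (h : N < n) : towerBound N n = 1 := by
  rw [towerBound, if_neg (by omega)]

theorem towerMajorant_towerBound (N : ℕ) : TowerMajorant N (towerBound N) := by
  intro n
  rcases le_or_gt n N with hn | hn
  · rw [towerBound_of_le hn]
  · have : (N : ℝ) + 1 ≤ n := by exact_mod_cast hn
    rw [towerBound_of_lt hn, towerBound_of_lt (by omega), Real.exp_le_one_iff]
    linarith

theorem Finset.prod_Ico_le_prod_range_of_one_le {f : ℕ → ℝ} {M : ℕ} (h1 : ∀ j, 1 ≤ f j)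
    (hM : ∀ j, M ≤ j → f j = 1) (a b : ℕ) :
    ∏ j ∈ Finset.Ico a b, f j ≤ ∏ j ∈ Finset.range M, f j :=
  calc ∏ j ∈ Finset.Ico a b, f j ≤ ∏ j ∈ Finset.range (max b M), f j :=
        Finset.prod_le_prod_of_subset_of_one_le
          (fun j hj => by simp only [Finset.mem_Ico, Finset.mem_range] at hj ⊢; omega)
          (fun j _ => zero_le_one.trans (h1 j)) (fun j _ _ => h1 j)
    _ = ∏ j ∈ Finset.range M, f j :=
        (Finset.prod_subset (Finset.range_subset_range.2 (le_max_right b M))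
          (fun j _ hj => hM j (by simpa using hj))).symm

theorem phiSeq_succ (s : ℂ) (k : ℕ) : phiSeq (k + 1) s = PhiNest s 0 1 k := by
  simp [phiSeq, PhiComp]

theorem TowerMajorant.norm_phiSeq_succ_sub_le {R : ℝ} {b : ℕ → ℝ} (hb : TowerMajorant R b)
    {s : ℂ} (hs : ‖s‖ ≤ R) (k : ℕ) :
    ‖phiSeq (k + 2) s - phiSeq (k + 1) s‖ ≤
      (∏ j ∈ Finset.Ico 1 (k + 2), b j) * Real.exp (R - (k + 2)) := by
  set ε := Complex.exp (s - (k + 2 : ℕ) + 0)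
  have hphi : phiSeq (k + 2) s = PhiNest s ε 1 k := by
    rw [phiSeq_succ, PhiNest_succ_eq_inner, add_comm 1 k]
  have hε : ‖ε‖ ≤ Real.exp (R - (k + 2)) := by
    rw [Complex.norm_exp]
    refine Real.exp_le_exp.2 ((re_sub_natCast_add_le hs _ 0).trans (le_of_eq ?_))
    push_cast
    rw [norm_zero, add_zero]
  have h0 : ‖(0 : ℂ)‖ ≤ b (1 + k + 1) := by simpa using hb.nonneg _
  have hε' : ‖ε‖ ≤ b (1 + k + 1) := by
    rw [show 1 + k + 1 = k + 2 by omega]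
    exact hb.norm_exp_le hs (by simpa using hb.nonneg _)
  have hlip := hb.norm_PhiNest_sub_le hs hε' h0
  rw [← hphi, ← phiSeq_succ, sub_zero, show 1 + k + 1 = k + 2 by omega] at hlip
  exact hlip.trans (mul_le_mul_of_nonneg_left hε (Finset.prod_nonneg fun j _ => hb.nonneg j))

theorem norm_phiSeq_succ_sub_le {N : ℕ} {s : ℂ} (hs : ‖s‖ ≤ N) (m : ℕ) :
    ‖phiSeq (m + 1) s - phiSeq m s‖ ≤
      (∏ j ∈ Finset.range (N + 1), towerBound N j) * Real.exp (N - m) := by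
  have hC : 0 ≤ ∏ j ∈ Finset.range (N + 1), towerBound N j :=
    Finset.prod_nonneg fun j _ => zero_le_one.trans (one_le_towerBound N j)
  cases m with
  | zero => simpa [phiSeq, PhiComp] using mul_nonneg hC (Real.exp_pos _).le
  | succ k =>
    refine ((towerMajorant_towerBound N).norm_phiSeq_succ_sub_le hs k).trans ?_
    refine mul_le_mul (Finset.prod_Ico_le_prod_range_of_one_le (one_le_towerBound N)
      (fun j hj => towerBound_of_lt hj) _ _) (Real.exp_le_exp.2 ?_) (Real.exp_pos _).le hC
    push_cast
    linarith

noncomputable def phiLim (s : ℂ) : ℂ :=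
  phiSeq 0 s + ∑' m, (phiSeq (m + 1) s - phiSeq m s)

theorem tendstoUniformlyOn_phiSeq_closedBall (N : ℕ) :
    TendstoUniformlyOn phiSeq phiLim atTop (Metric.closedBall 0 N) := by
  set C := ∏ j ∈ Finset.range (N + 1), towerBound N j
  have hsum : Summable fun m : ℕ => C * Real.exp (N - m) := by
    simpa [sub_eq_add_neg, Real.exp_add, mul_assoc] using
      Real.summable_exp_neg_nat.mul_left (C * Real.exp N)
  have hM := tendstoUniformlyOn_tsum_nat hsum (s := Metric.closedBall 0 N)
    (f := fun m s => phiSeq (m + 1) s - phiSeq m s)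
    fun m s hs => norm_phiSeq_succ_sub_le (by simpa using hs) m
  have hconst : TendstoUniformlyOn (fun _ : ℕ => phiSeq 0) (phiSeq 0) atTop
      (Metric.closedBall 0 N) :=
    fun u hu => Eventually.of_forall fun _ _ _ => refl_mem_uniformity hu
  refine (hconst.add hM).congr (Eventually.of_forall fun m s _ => ?_)
  change phiSeq 0 s + ∑ i ∈ Finset.range m, (phiSeq (i + 1) s - phiSeq i s) = phiSeq m s
  rw [Finset.sum_range_sub (phiSeq · s), add_sub_cancel]

theorem tendstoUniformlyOn_phiSeq {K : Set ℂ} (hK : IsCompact K) :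
    TendstoUniformlyOn phiSeq phiLim atTop K := by
  obtain ⟨R, hKR⟩ := hK.isBounded.subset_closedBall 0
  exact (tendstoUniformlyOn_phiSeq_closedBall ⌈R⌉₊).mono
    (hKR.trans (Metric.closedBall_subset_closedBall (Nat.le_ceil R)))

theorem differentiable_phiLim : Differentiable ℂ phiLim := by
  have h : TendstoLocallyUniformlyOn phiSeq phiLim atTop Set.univ :=
    (tendstoLocallyUniformlyOn_iff_forall_isCompact isOpen_univ).2
      fun _ _ hK => tendstoUniformlyOn_phiSeq hK
  rw [← differentiableOn_univ]
  exact h.differentiableOn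
    (Eventually.of_forall fun _ => (differentiable_PhiNest 0 1 _).differentiableOn) isOpen_univ

theorem tendsto_phiSeq (s : ℂ) : Tendsto (phiSeq · s) atTop (nhds (phiLim s)) :=
  (tendstoUniformlyOn_phiSeq isCompact_singleton).tendsto_at rfl

theorem phiSeq_add_two_add_one (s : ℂ) (k : ℕ) :
    phiSeq (k + 2) (s + 1) = Complex.exp (s + phiSeq (k + 1) s) := by
  rw [phiSeq_succ, phiSeq_succ, PhiNest, PhiNest_shift, Nat.cast_one, add_sub_cancel_right]

theorem exp_add_phiLim (s : ℂ) : Complex.exp (s + phiLim s) = phiLim (s + 1) := by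
  have hlhs := (Complex.continuous_exp.tendsto _).comp
    (((tendsto_phiSeq s).comp (tendsto_add_atTop_nat 1)).const_add s)
  have hrhs := (tendsto_phiSeq (s + 1)).comp (tendsto_add_atTop_nat 2)
  exact tendsto_nhds_unique hlhs (hrhs.congr fun k => phiSeq_add_two_add_one s k)

theorem phiSeq_tendsto_entire :
    ∃ φ : ℂ → ℂ,
      (∀ K : Set ℂ, IsCompact K →
        TendstoUniformlyOn (fun m s => phiSeq m s) φ atTop K) ∧
      Differentiable ℂ φ ∧
      ∀ s : ℂ, Complex.exp (s + φ s) = φ (s + 1) :=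
  ⟨phiLim, fun _ hK => tendstoUniformlyOn_phiSeq hK, differentiable_phiLim, exp_add_phiLim⟩
end

section
/- If φ : ℂ → ℂ is the locally uniform limit of the functions φ_m, then φ is real-valued on ℝ, φ(t) > 0 for all real t, φ is strictly increasing on ℝ, and φ(t) → ∞ as t → ∞. -/
open Filter

/-!
On the real axis the recursion `φ_{m+1}(t) = exp(t - 1 + φ_m(t - 1))` keeps every `φ_m` real and
monotone, so the limit `ψ = φ|_ℝ` is real and monotone and inherits the functional
equation `ψ(t) = exp(t - 1 + ψ(t - 1))`. The functional equation upgrades monotonicity to strict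
monotonicity, and gives `ψ(t) ≥ exp(t - 1)`, whence `ψ(t) → ∞`.
-/

open Topology

lemma PhiNest_succ_eq_sub_one (s z : ℂ) (n k : ℕ) :
    PhiNest s z (n + 1) k = PhiNest (s - 1) z n k := by
  induction k generalizing n with
  | zero => simp only [PhiNest]; push_cast; ring_nf
  | succ k ih => simp only [PhiNest, ih]; push_cast; ring_nf

lemma phiSeq_one (s : ℂ) : phiSeq 1 s = Complex.exp (s - 1) := by
  simp [phiSeq, PhiComp, PhiNest]

lemma phiSeq_add_two (m : ℕ) (s : ℂ) :
    phiSeq (m + 2) s = Complex.exp (s - 1 + phiSeq (m + 1) (s - 1)) := by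
  simp only [phiSeq, PhiComp, show m + 2 - 1 = m + 1 by omega, PhiNest, PhiNest_succ_eq_sub_one]
  norm_num

/-- `realPhiSeq m t = φ_m(t)` for `m ≥ 1`; `realPhiSeq 0 = 0` is the empty composition. -/
noncomputable def realPhiSeq : ℕ → ℝ → ℝ
  | 0, _ => 0
  | m + 1, t => Real.exp (t - 1 + realPhiSeq m (t - 1))

lemma realPhiSeq_monotone (m : ℕ) : Monotone (realPhiSeq m) := by
  induction m with
  | zero => exact monotone_const
  | succ m ih =>
    intro a b hab
    have := ih (by linarith : a - 1 ≤ b - 1)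
    exact Real.exp_le_exp.2 (by linarith)

lemma phiSeq_succ_ofReal (m : ℕ) (t : ℝ) : phiSeq (m + 1) t = realPhiSeq (m + 1) t := by
  induction m generalizing t with
  | zero => simp [phiSeq_one, realPhiSeq]
  | succ m ih =>
    rw [phiSeq_add_two, show (t : ℂ) - 1 = ((t - 1 : ℝ) : ℂ) by push_cast; ring, ih]
    change _ = ((Real.exp (t - 1 + realPhiSeq (m + 1) (t - 1)) : ℝ) : ℂ)
    push_cast
    rfl

lemma tendsto_ofReal_realPhiSeq {t : ℝ} {w : ℂ}
    (h : Tendsto (fun m => phiSeq m t) atTop (𝓝 w)) :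
    Tendsto (fun m => (realPhiSeq m t : ℂ)) atTop (𝓝 w) := by
  rw [← tendsto_add_atTop_iff_nat 1] at h ⊢
  simpa only [phiSeq_succ_ofReal] using h

lemma Complex.exists_eq_ofReal_of_tendsto {α : Type*} {l : Filter α} [l.NeBot] {f : α → ℝ}
    {w : ℂ} (h : Tendsto (fun a => (f a : ℂ)) l (𝓝 w)) :
    ∃ r : ℝ, w = r ∧ Tendsto f l (𝓝 r) := by
  obtain ⟨r, rfl⟩ : w ∈ Set.range ((↑) : ℝ → ℂ) :=
    Complex.isUniformEmbedding_ofReal.isClosedEmbedding.isClosed_range.mem_of_tendsto h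
      (Eventually.of_forall fun a => ⟨f a, rfl⟩)
  exact ⟨r, rfl, tendsto_ofReal_iff.1 h⟩

lemma monotone_of_tendsto_of_monotone {ι α β : Type*} [Preorder α] [TopologicalSpace β]
    [Preorder β] [OrderClosedTopology β] {l : Filter ι} [l.NeBot] {F : ι → α → β} {f : α → β}
    (hF : ∀ i, Monotone (F i)) (h : ∀ a, Tendsto (F · a) l (𝓝 (f a))) : Monotone f :=
  fun _ _ hab => le_of_tendsto_of_tendsto' (h _) (h _) fun i => hF i hab

lemma eq_exp_of_tendsto_realPhiSeq {ψ : ℝ → ℝ}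
    (hψ : ∀ t, Tendsto (fun m => realPhiSeq m t) atTop (𝓝 (ψ t))) (t : ℝ) :
    ψ t = Real.exp (t - 1 + ψ (t - 1)) := by
  have hshift : Tendsto (fun m => realPhiSeq (m + 1) t) atTop (𝓝 (ψ t)) :=
    (tendsto_add_atTop_iff_nat 1).2 (hψ t)
  have hexp : Tendsto (fun m => realPhiSeq (m + 1) t) atTop
      (𝓝 (Real.exp (t - 1 + ψ (t - 1)))) :=
    (Real.continuous_exp.tendsto _).comp ((hψ (t - 1)).const_add _)
  exact tendsto_nhds_unique hshift hexp

lemma strictMono_of_monotone_of_eq_exp {ψ : ℝ → ℝ} (hmono : Monotone ψ)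
    (heq : ∀ t, ψ t = Real.exp (t - 1 + ψ (t - 1))) : StrictMono ψ := by
  intro a b hab
  have := hmono (by linarith : a - 1 ≤ b - 1)
  rw [heq a, heq b]
  exact Real.exp_lt_exp.2 (by linarith)

theorem phi_real_positive_strictMono_tendsto (φ : ℂ → ℂ)
    (hlim : ∀ K : Set ℂ, IsCompact K →
      TendstoUniformlyOn (fun m s => phiSeq m s) φ atTop K) :
    (∀ t : ℝ, (φ (t : ℂ)).im = 0) ∧
    (∀ t : ℝ, 0 < (φ (t : ℂ)).re) ∧
    StrictMono (fun t : ℝ => (φ (t : ℂ)).re) ∧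
    Tendsto (fun t : ℝ => (φ (t : ℂ)).re) atTop atTop := by
  choose ψ hφψ hψ using fun t : ℝ => Complex.exists_eq_ofReal_of_tendsto
    (tendsto_ofReal_realPhiSeq ((hlim _ isCompact_singleton).tendsto_at rfl))
  have heq := eq_exp_of_tendsto_realPhiSeq hψ
  have hstrict : StrictMono ψ := strictMono_of_monotone_of_eq_exp
    (monotone_of_tendsto_of_monotone realPhiSeq_monotone hψ) heq
  have hψ_pos (t : ℝ) : 0 < ψ t := heq t ▸ Real.exp_pos _
  have hexp_le (t : ℝ) : Real.exp (t - 1) ≤ ψ t :=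
    heq t ▸ Real.exp_le_exp.2 (by linarith [hψ_pos (t - 1)])
  simp only [hφψ, Complex.ofReal_re, Complex.ofReal_im]
  exact ⟨fun _ => trivial, hψ_pos, hstrict, tendsto_atTop_mono hexp_le
    (Real.tendsto_exp_atTop.comp (tendsto_atTop_add_const_right _ _ tendsto_id))⟩
end

section
/- For every integer n ≥ 1 and every real t ≥ T, one has |τ_{n+1}(t) − τ_n(t)| ≤ (t + n) / ∏_{k=1}^{n} φ(t+k). -/
/-- The correction terms `τ_n` built from a real function `f` (the restriction
of `φ` to the real line): `τ_0 = 0`, `τ_{n+1}(t) = t + log(1 + τ_n(t+1)/f(t+1))`. -/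
noncomputable def tauSeq (f : ℝ → ℝ) : ℕ → ℝ → ℝ
  | 0 => fun _ => 0
  | n + 1 => fun t => t + Real.log (1 + tauSeq f n (t + 1) / f (t + 1))

open Filter Finset

theorem Real.abs_log_one_add_sub_log_one_add_le {a b : ℝ} (ha : 0 ≤ a) (hb : 0 ≤ b) :
    |Real.log (1 + a) - Real.log (1 + b)| ≤ |a - b| := by
  wlog hba : b ≤ a generalizing a b
  · rw [abs_sub_comm, abs_sub_comm a]
    exact this hb ha (le_of_not_ge hba)
  have hb1 : 0 < 1 + b := by linarith
  rw [abs_of_nonneg (sub_nonneg.2 hba),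
    abs_of_nonneg (sub_nonneg.2 (Real.log_le_log hb1 (by linarith))),
    ← Real.log_div (by linarith) hb1.ne']
  calc Real.log ((1 + a) / (1 + b)) ≤ (1 + a) / (1 + b) - 1 :=
        Real.log_le_sub_one_of_pos (by positivity)
    _ = (a - b) / (1 + b) := by field_simp; ring
    _ ≤ a - b := div_le_self (by linarith) (by linarith)

theorem Finset.prod_Icc_one_succ_add (g : ℝ → ℝ) (t : ℝ) (n : ℕ) :
    ∏ k ∈ Icc 1 (n + 1), g (t + k) = g (t + 1) * ∏ k ∈ Icc 1 n, g (t + 1 + k) := by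
  induction n with
  | zero => simp
  | succ n ih =>
    rw [prod_Icc_succ_top (by omega), ih, prod_Icc_succ_top (by omega), mul_assoc]
    push_cast
    ring_nf

section TauSeq

variable {f : ℝ → ℝ} {T : ℝ}

theorem tauSeq_nonneg (hT : 0 ≤ T) (hf : ∀ t, T ≤ t → 0 < f t) (n : ℕ) {t : ℝ} (ht : T ≤ t) :
    0 ≤ tauSeq f n t := by
  induction n generalizing t with
  | zero => exact le_rfl
  | succ n ih =>
    have hlog : 0 ≤ Real.log (1 + tauSeq f n (t + 1) / f (t + 1)) :=
      Real.log_nonneg <| le_add_of_nonneg_right <|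
        div_nonneg (ih (by linarith)) (hf _ (by linarith)).le
    exact add_nonneg (by linarith) hlog

theorem abs_tauSeq_succ_succ_sub_le (hT : 0 ≤ T) (hf : ∀ t, T ≤ t → 0 < f t) (n : ℕ) {t : ℝ}
    (ht : T ≤ t) :
    |tauSeq f (n + 2) t - tauSeq f (n + 1) t|
      ≤ |tauSeq f (n + 1) (t + 1) - tauSeq f n (t + 1)| / f (t + 1) := by
  have ht1 : T ≤ t + 1 := by linarith
  have hf1 := hf _ ht1
  have hdiff : tauSeq f (n + 2) t - tauSeq f (n + 1) t
      = Real.log (1 + tauSeq f (n + 1) (t + 1) / f (t + 1))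
        - Real.log (1 + tauSeq f n (t + 1) / f (t + 1)) := by
    simp only [tauSeq]
    ring
  rw [hdiff, ← abs_of_pos hf1, ← abs_div, sub_div, abs_of_pos hf1]
  exact Real.abs_log_one_add_sub_log_one_add_le
    (div_nonneg (tauSeq_nonneg hT hf _ ht1) hf1.le) (div_nonneg (tauSeq_nonneg hT hf _ ht1) hf1.le)

theorem abs_tauSeq_succ_sub_le (hT : 0 ≤ T) (hf : ∀ t, T ≤ t → 0 < f t) (n : ℕ) {t : ℝ}
    (ht : T ≤ t) :
    |tauSeq f (n + 1) t - tauSeq f n t| ≤ (t + n) / ∏ k ∈ Icc 1 n, f (t + k) := by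
  induction n generalizing t with
  | zero =>
    simp [tauSeq, abs_of_nonneg (hT.trans ht)]
  | succ n ih =>
    have ht1 : T ≤ t + 1 := by linarith
    calc |tauSeq f (n + 2) t - tauSeq f (n + 1) t|
        ≤ |tauSeq f (n + 1) (t + 1) - tauSeq f n (t + 1)| / f (t + 1) :=
          abs_tauSeq_succ_succ_sub_le hT hf n ht
      _ ≤ (t + 1 + n) / (∏ k ∈ Icc 1 n, f (t + 1 + k)) / f (t + 1) := by
          gcongr
          · exact (hf _ ht1).le
          · exact ih ht1
      _ = (t + ↑(n + 1)) / ∏ k ∈ Icc 1 (n + 1), f (t + k) := by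
          rw [prod_Icc_one_succ_add, div_div, mul_comm]
          push_cast
          ring_nf

end TauSeq

theorem tauSeq_successive_difference_bound_general (φ : ℂ → ℂ)
    (hpos : ∀ t : ℝ, 0 < (φ (t : ℂ)).re)
    (T : ℝ) (hT : 0 ≤ T) :
    ∀ n : ℕ, 1 ≤ n → ∀ t : ℝ, T ≤ t →
      |tauSeq (fun u : ℝ => (φ (u : ℂ)).re) (n + 1) t
        - tauSeq (fun u : ℝ => (φ (u : ℂ)).re) n t|
      ≤ (t + n) / ∏ k ∈ Finset.Icc 1 n, (φ ((t + k : ℝ) : ℂ)).re := by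
  intro n _ t ht
  exact abs_tauSeq_succ_sub_le hT (fun u _ => hpos u) n ht

theorem tauSeq_successive_difference_bound (φ : ℂ → ℂ)
    (hlim : ∀ K : Set ℂ, IsCompact K →
      TendstoUniformlyOn (fun m s => phiSeq m s) φ atTop K)
    (hfe : ∀ s : ℂ, Complex.exp (s + φ s) = φ (s + 1))
    (hreal : ∀ t : ℝ, (φ (t : ℂ)).im = 0)
    (hpos : ∀ t : ℝ, 0 < (φ (t : ℂ)).re)
    (hmono : StrictMono (fun t : ℝ => (φ (t : ℂ)).re))
    (htop : Tendsto (fun t : ℝ => (φ (t : ℂ)).re) atTop atTop)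
    (T : ℝ) (hT : 0 ≤ T) (hT1 : ∀ t : ℝ, T ≤ t → 1 < (φ (t : ℂ)).re) :
    ∀ n : ℕ, 1 ≤ n → ∀ t : ℝ, T ≤ t →
      |tauSeq (fun u : ℝ => (φ (u : ℂ)).re) (n + 1) t
        - tauSeq (fun u : ℝ => (φ (u : ℂ)).re) n t|
      ≤ (t + n) / ∏ k ∈ Finset.Icc 1 n, (φ ((t + k : ℝ) : ℂ)).re :=
  tauSeq_successive_difference_bound_general φ hpos T hT
end

section
/- There exists a function F : ℝ → ℝ such that F restricted to the interval (−2, ∞) is continuously differentiable with F'(t) > 0 for all t > −2, F maps (−2, ∞) bijectively onto ℝ, F(0) = 1, and exp(F(t)) = F(t+1) for all t > −2. -/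
/-!
Take `F t = log (t + 2)` on `(-2, -1]`, `F t = t + 1` on `(-1, 0]`, and continue `F` to the right
by `F (t + 1) = exp (F t)`. The two pieces have value `0` and slope `1` at `-1`, so `F` is `C¹`
with positive derivative on `(-2, 0)`; since `F t = exp (F (t - 1))` for `t > -1`, both properties
propagate one unit interval at a time. Strict monotonicity gives injectivity, and surjectivity
follows from the intermediate value theorem, as `F t → -∞` at `-2` and `F n ≥ n + 1`.
-/

open Set Real Filter Topology

lemma hasDerivAt_ite_le {f g f' g' : ℝ → ℝ} {a x : ℝ}
    (hf : x ≤ a → HasDerivAt f (f' x) x) (hg : a ≤ x → HasDerivAt g (g' x) x)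
    (ha : f a = g a) (ha' : f' a = g' a) :
    HasDerivAt (fun y => if y ≤ a then f y else g y) (if x ≤ a then f' x else g' x) x := by
  rcases lt_trichotomy x a with hlt | rfl | hgt
  · rw [if_pos hlt.le]
    exact (hf hlt.le).congr_of_eventuallyEq
      ((eventually_lt_nhds hlt).mono fun y hy => if_pos hy.le)
  · rw [if_pos le_rfl]
    have hleft : HasDerivWithinAt (fun y => if y ≤ x then f y else g y) (f' x) (Iic x) x :=
      (hf le_rfl).hasDerivWithinAt.congr (fun y hy => if_pos hy) (if_pos le_rfl)
    have hright : HasDerivWithinAt (fun y => if y ≤ x then f y else g y) (f' x) (Ici x) x := by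
      rw [ha']
      refine (hg le_rfl).hasDerivWithinAt.congr (fun y hy => ?_) (by rw [if_pos le_rfl, ha])
      split_ifs with h
      · rw [le_antisymm h hy, ha]
      · rfl
    simpa using hleft.union hright
  · rw [if_neg hgt.not_ge]
    exact (hg hgt.le).congr_of_eventuallyEq
      ((eventually_gt_nhds hgt).mono fun y hy => if_neg hy.not_ge)

lemma ContinuousOn.ite_le {β : Type*} [TopologicalSpace β] {f g : ℝ → β} {a : ℝ}
    {s : Set ℝ}
    (hf : ContinuousOn f (s ∩ Iic a)) (hg : ContinuousOn g (s ∩ Ici a)) (ha : f a = g a) :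
    ContinuousOn (fun x => if x ≤ a then f x else g x) s := by
  refine ContinuousOn.if ?_ ?_ ?_
  · rintro x ⟨-, hx⟩
    rw [show {x : ℝ | x ≤ a} = Iic a from rfl, frontier_Iic, mem_singleton_iff] at hx
    rw [hx, ha]
  · rwa [show {x : ℝ | x ≤ a} = Iic a from rfl, closure_Iic]
  · rwa [show {x : ℝ | ¬x ≤ a} = Ioi a by ext; simp, closure_Ioi]

lemma contDiffOn_one_of_hasDerivAt {𝕜 F : Type*} [NontriviallyNormedField 𝕜]
    [NormedAddCommGroup F] [NormedSpace 𝕜 F] {f f' : 𝕜 → F} {U : Set 𝕜} (hU : IsOpen U)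
    (hd : ∀ x ∈ U, HasDerivAt f (f' x) x) (hc : ContinuousOn f' U) : ContDiffOn 𝕜 1 f U := by
  rw [show (1 : WithTop ℕ∞) = 0 + 1 from rfl, contDiffOn_succ_iff_deriv_of_isOpen hU]
  refine ⟨fun x hx => (hd x hx).differentiableAt.differentiableWithinAt, by simp, ?_⟩
  rw [contDiffOn_zero]
  exact hc.congr fun x hx => (hd x hx).deriv

lemma contDiffAt_and_deriv_pos_of_eventuallyEq_exp {F : ℝ → ℝ} {t : ℝ}
    (hF : ContDiffAt ℝ 1 F (t - 1) ∧ 0 < deriv F (t - 1))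
    (heq : F =ᶠ[𝓝 t] fun s => exp (F (s - 1))) :
    ContDiffAt ℝ 1 F t ∧ 0 < deriv F t := by
  have hshift : ContDiffAt ℝ 1 (fun s => exp (F (s - 1))) t :=
    contDiff_exp.contDiffAt.comp t (hF.1.comp t (contDiffAt_id.sub contDiffAt_const))
  have hderiv : HasDerivAt (fun s => exp (F (s - 1))) (exp (F (t - 1)) * deriv F (t - 1)) t :=
    ((hF.1.differentiableAt one_ne_zero).hasDerivAt.comp_sub_const t 1).exp
  refine ⟨hshift.congr_of_eventuallyEq heq, ?_⟩
  rw [heq.deriv_eq, hderiv.deriv]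
  exact mul_pos (exp_pos _) hF.2

noncomputable def linearTetration (t : ℝ) : ℝ :=
  if t ≤ -1 then log (t + 2) else exp^[⌈t⌉.toNat] (t + 1 - ⌈t⌉)

lemma linearTetration_of_le {t : ℝ} (ht : t ≤ -1) : linearTetration t = log (t + 2) := if_pos ht

lemma linearTetration_of_mem_Ioc {t : ℝ} (ht : t ∈ Ioc (-1) 0) : linearTetration t = t + 1 := by
  rw [linearTetration, if_neg (not_le.2 ht.1), Int.ceil_eq_zero_iff.2 ht]
  simp

lemma linearTetration_zero : linearTetration 0 = 1 := by
  simpa using linearTetration_of_mem_Ioc (t := 0) (by norm_num)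

lemma exp_linearTetration {t : ℝ} (ht : -2 < t) :
    exp (linearTetration t) = linearTetration (t + 1) := by
  rcases le_or_gt t (-1) with hle | hgt
  · rw [linearTetration_of_le hle, exp_log (by linarith),
      linearTetration_of_mem_Ioc ⟨by linarith, by linarith⟩]
    ring
  · have hceil : 0 ≤ ⌈t⌉ := by
      have : (-1 : ℤ) < ⌈t⌉ := Int.lt_ceil.2 (by exact_mod_cast hgt)
      omega
    rw [linearTetration, linearTetration, if_neg hgt.not_ge, if_neg (by linarith),
      Int.ceil_add_one, Int.toNat_add hceil zero_le_one, Int.toNat_one,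
      Function.iterate_succ_apply']
    push_cast
    ring_nf

lemma natCast_add_one_le_linearTetration (n : ℕ) : (n : ℝ) + 1 ≤ linearTetration n := by
  induction n with
  | zero => simp [linearTetration_zero]
  | succ n ih =>
    rw [Nat.cast_succ, ← exp_linearTetration (by linarith [n.cast_nonneg (α := ℝ)])]
    linarith [add_one_le_exp (linearTetration n)]

lemma hasDerivAt_linearTetration_of_mem_Ioo {t : ℝ} (ht : t ∈ Ioo (-2) 0) :
    HasDerivAt linearTetration (if t ≤ -1 then (t + 2)⁻¹ else 1) t := by
  have hglue : HasDerivAt (fun s => if s ≤ -1 then log (s + 2) else s + 1)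
      (if t ≤ -1 then (t + 2)⁻¹ else 1) t :=
    hasDerivAt_ite_le (f' := fun s => (s + 2)⁻¹) (g' := fun _ => 1)
      (fun _ => by simpa using ((hasDerivAt_id' t).add_const 2).log (by linarith [ht.1]))
      (fun _ => (hasDerivAt_id t).add_const 1) (by norm_num) (by norm_num)
  refine hglue.congr_of_eventuallyEq ((eventually_lt_nhds ht.2).mono fun s hs => ?_)
  dsimp only
  split_ifs with h
  · exact linearTetration_of_le h
  · exact linearTetration_of_mem_Ioc ⟨not_le.1 h, hs.le⟩

lemma contDiffAt_linearTetration_and_deriv_pos_of_mem_Ioo {t : ℝ} (ht : t ∈ Ioo (-2) 0) :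
    ContDiffAt ℝ 1 linearTetration t ∧ 0 < deriv linearTetration t := by
  have hderiv_cont :
      ContinuousOn (fun s : ℝ => if s ≤ -1 then (s + 2)⁻¹ else 1) (Ioo (-2) 0) :=
    ContinuousOn.ite_le
      ((continuous_add_const 2).continuousOn.inv₀ fun s hs => by linarith [hs.1.1])
      continuousOn_const (by norm_num)
  have hC1 : ContDiffOn ℝ 1 linearTetration (Ioo (-2) 0) :=
    contDiffOn_one_of_hasDerivAt isOpen_Ioo
      (fun _ hs => hasDerivAt_linearTetration_of_mem_Ioo hs) hderiv_cont
  refine ⟨hC1.contDiffAt (isOpen_Ioo.mem_nhds ht), ?_⟩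
  rw [(hasDerivAt_linearTetration_of_mem_Ioo ht).deriv]
  split_ifs
  · exact inv_pos.2 (by linarith [ht.1])
  · exact one_pos

lemma contDiffAt_linearTetration_and_deriv_pos {t : ℝ} (ht : -2 < t) :
    ContDiffAt ℝ 1 linearTetration t ∧ 0 < deriv linearTetration t := by
  obtain ⟨n, hn⟩ := exists_nat_gt t
  induction n generalizing t with
  | zero => exact contDiffAt_linearTetration_and_deriv_pos_of_mem_Ioo ⟨ht, by simpa using hn⟩
  | succ n ih =>
    rcases lt_or_ge t n with htn | htn
    · exact ih ht htn
    have hgt : -1 < t := by linarith [n.cast_nonneg (α := ℝ)]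
    refine contDiffAt_and_deriv_pos_of_eventuallyEq_exp
      (ih (by linarith) (by push_cast at hn; linarith)) ?_
    filter_upwards [eventually_gt_nhds hgt] with s hs
    simpa using (exp_linearTetration (t := s - 1) (by linarith)).symm

lemma continuousOn_linearTetration : ContinuousOn linearTetration (Ioi (-2)) :=
  fun _ ht => (contDiffAt_linearTetration_and_deriv_pos ht).1.continuousAt.continuousWithinAt

lemma strictMonoOn_linearTetration : StrictMonoOn linearTetration (Ioi (-2)) :=
  strictMonoOn_of_deriv_pos (convex_Ioi _) continuousOn_linearTetration fun _ ht =>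
    (contDiffAt_linearTetration_and_deriv_pos (by simpa using ht)).2

lemma surjOn_linearTetration : SurjOn linearTetration (Ioi (-2)) univ := by
  intro y _
  set a := exp (min y 0) - 2
  have ha_gt : -2 < a := by linarith [exp_pos (min y 0)]
  have ha_le : a ≤ -1 := by linarith [exp_le_one_iff.2 (min_le_right y 0)]
  have hFa : linearTetration a = min y 0 := by
    rw [linearTetration_of_le ha_le, sub_add_cancel, log_exp]
  have hab : a ≤ ⌈y⌉₊ := by linarith [(⌈y⌉₊).cast_nonneg (α := ℝ)]
  have hy : y ∈ Icc (linearTetration a) (linearTetration ⌈y⌉₊) :=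
    ⟨hFa ▸ min_le_left y 0,
      by linarith [Nat.le_ceil y, natCast_add_one_le_linearTetration ⌈y⌉₊]⟩
  obtain ⟨x, hx, rfl⟩ := intermediate_value_Icc hab
    (continuousOn_linearTetration.mono fun x hx => ha_gt.trans_le hx.1) hy
  exact ⟨x, ha_gt.trans_le hx.1, rfl⟩

/-- There exists a continuously differentiable tetration function (base `e`):
`F : (-2, ∞) → ℝ` bijective, with positive derivative, `F 0 = 1`, and
`exp (F t) = F (t+1)` on `(-2, ∞)`. -/
theorem exists_C1_tetration :
    ∃ F : ℝ → ℝ,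
      ContDiffOn ℝ 1 F (Set.Ioi (-2 : ℝ)) ∧
      (∀ t : ℝ, -2 < t → 0 < deriv F t) ∧
      Set.BijOn F (Set.Ioi (-2 : ℝ)) Set.univ ∧
      F 0 = 1 ∧
      (∀ t : ℝ, -2 < t → Real.exp (F t) = F (t + 1)) :=
  ⟨linearTetration,
    fun _ ht => (contDiffAt_linearTetration_and_deriv_pos ht).1.contDiffWithinAt,
    fun _ ht => (contDiffAt_linearTetration_and_deriv_pos ht).2,
    ⟨mapsTo_univ _ _, strictMonoOn_linearTetration.injOn, surjOn_linearTetration⟩,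
    linearTetration_zero,
    fun _ ht => exp_linearTetration ht⟩
end

section
/- There exists a continuously differentiable, strictly increasing function A : ℝ → ℝ whose range is exactly the interval (−2, ∞), with A(1) = 0 and A(exp(t)) = A(t) + 1 for all t ∈ ℝ. -/
/-!
Take logarithms of `t` until the value `s` is `≤ 0`, say `n` times, and put
`A t = eˢ + n - 2`; the equation `A (eᵗ) = A t + 1` is then built in. Across a seam
`log^[n] t = 0` the formula switches from `e^(log^[n] t) + n - 2` to `log^[n] t + n - 1`,
and both are `glue (log^[n] t) + n - 1`, where `glue s = eˢ - 1` for `s ≤ 0` and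
`glue s = s` for `s ≥ 0` is `C¹` with positive derivative `e^(min s 0)`. So near every point
`A` is a `C¹` function of an iterated logarithm, with positive derivative.
-/

open Real Filter Topology Function

namespace Superlog

noncomputable def glue (s : ℝ) : ℝ := ∫ u in (0 : ℝ)..s, exp (min u 0)

lemma continuous_exp_min_zero : Continuous fun u : ℝ => exp (min u 0) := by fun_prop

lemma hasDerivAt_glue (s : ℝ) : HasDerivAt glue (exp (min s 0)) s :=
  (continuous_exp_min_zero.integral_hasStrictDerivAt 0 s).hasDerivAt

lemma contDiff_glue : ContDiff ℝ 1 glue := by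
  rw [contDiff_one_iff_deriv]
  refine ⟨fun s => (hasDerivAt_glue s).differentiableAt, ?_⟩
  rw [funext fun s => (hasDerivAt_glue s).deriv]
  exact continuous_exp_min_zero

lemma glue_of_nonpos {s : ℝ} (hs : s ≤ 0) : glue s = exp s - 1 := by
  have h : Set.EqOn (fun u : ℝ => exp (min u 0)) exp (Set.uIcc 0 s) := by
    intro u hu
    rw [Set.uIcc_of_ge hs] at hu
    simp [min_eq_left hu.2]
  rw [glue, intervalIntegral.integral_congr h, integral_exp, exp_zero]

lemma glue_of_nonneg {s : ℝ} (hs : 0 ≤ s) : glue s = s := by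
  have h : Set.EqOn (fun u : ℝ => exp (min u 0)) (fun _ => 1) (Set.uIcc 0 s) := by
    intro u hu
    rw [Set.uIcc_of_le hs] at hu
    simp [min_eq_right hu.1]
  simp [glue, intervalIntegral.integral_congr h]

lemma exists_iterate_log_nonpos (t : ℝ) : ∃ n : ℕ, log^[n] t ≤ 0 := by
  obtain ⟨m, hm⟩ := exists_nat_ge t
  induction m generalizing t with
  | zero => exact ⟨0, by simpa using hm⟩
  | succ m ih =>
    rcases le_or_gt t 0 with ht | ht
    · exact ⟨0, ht⟩
    · have hlog : log t ≤ m := by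
        push_cast at hm
        linarith [log_le_sub_one_of_pos ht]
      obtain ⟨k, hk⟩ := ih (log t) hlog
      exact ⟨k + 1, hk⟩

lemma contDiffAt_iterate_log {m : WithTop ℕ∞} {t : ℝ} {n : ℕ}
    (h : ∀ k < n, log^[k] t ≠ 0) : ContDiffAt ℝ m (log^[n]) t := by
  induction n with
  | zero => exact contDiffAt_id
  | succ n ih =>
    rw [iterate_succ']
    exact (contDiffAt_log.2 (h n n.lt_succ_self)).comp t (ih fun k hk => h k (by omega))

lemma hasDerivAt_iterate_log {t : ℝ} {n : ℕ} (h : ∀ k < n, log^[k] t ≠ 0) :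
    HasDerivAt (log^[n]) (∏ k ∈ Finset.range n, (log^[k] t)⁻¹) t := by
  induction n with
  | zero => simpa using hasDerivAt_id t
  | succ n ih =>
    rw [iterate_succ', Finset.prod_range_succ, mul_comm]
    exact (hasDerivAt_log (h n n.lt_succ_self)).comp t (ih fun k hk => h k (by omega))

noncomputable def logHeight (t : ℝ) : ℕ := Nat.find (exists_iterate_log_nonpos t)

lemma iterate_log_logHeight_nonpos (t : ℝ) : log^[logHeight t] t ≤ 0 :=
  Nat.find_spec (exists_iterate_log_nonpos t)

lemma iterate_log_pos_of_lt_logHeight {t : ℝ} {k : ℕ} (hk : k < logHeight t) :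
    0 < log^[k] t :=
  lt_of_not_ge (Nat.find_min (exists_iterate_log_nonpos t) hk)

lemma logHeight_eq_of {t : ℝ} {n : ℕ} (hpos : ∀ k < n, 0 < log^[k] t)
    (hn : log^[n] t ≤ 0) : logHeight t = n :=
  (Nat.find_eq_iff _).2 ⟨hn, fun k hk => not_le.2 (hpos k hk)⟩

lemma logHeight_exp (t : ℝ) : logHeight (exp t) = logHeight t + 1 := by
  apply logHeight_eq_of
  · rintro (_ | k) hk
    · simpa using exp_pos t
    · rw [iterate_succ_apply, log_exp]
      exact iterate_log_pos_of_lt_logHeight (by omega)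
  · rw [iterate_succ_apply, log_exp]
    exact iterate_log_logHeight_nonpos t

noncomputable def superlog (t : ℝ) : ℝ := exp (log^[logHeight t] t) + logHeight t - 2

lemma superlog_exp (t : ℝ) : superlog (exp t) = superlog t + 1 := by
  rw [superlog, superlog, logHeight_exp, iterate_succ_apply, log_exp]
  push_cast
  ring

lemma superlog_of_nonpos {t : ℝ} (ht : t ≤ 0) : superlog t = exp t - 2 := by
  simp [superlog, logHeight_eq_of (n := 0) (by omega) ht]

lemma superlog_one : superlog 1 = 0 := by
  have := superlog_exp 0
  rw [exp_zero, superlog_of_nonpos le_rfl, exp_zero] at this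
  linarith

lemma neg_two_lt_superlog (t : ℝ) : -2 < superlog t := by
  rw [superlog]
  linarith [exp_pos (log^[logHeight t] t), (logHeight t).cast_nonneg (α := ℝ)]

lemma superlog_iterate_exp_one (m : ℕ) : superlog (exp^[m] 1) = m := by
  induction m with
  | zero => simpa using superlog_one
  | succ m ih =>
    rw [iterate_succ_apply', superlog_exp, ih]
    push_cast
    ring

lemma superlog_eq_glue_iterate_log {t : ℝ} {n : ℕ} (hpos : ∀ k < n, 0 < log^[k] t)
    (hlt : log^[n] t < 1) : superlog t = glue (log^[n] t) + n - 1 := by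
  rcases le_or_gt (log^[n] t) 0 with hs | hs
  · rw [superlog, logHeight_eq_of hpos hs, glue_of_nonpos hs]
    ring
  · have hheight : logHeight t = n + 1 := by
      refine logHeight_eq_of (fun k hk => ?_) ?_
      · rcases Nat.lt_succ_iff_lt_or_eq.1 hk with hk | rfl
        exacts [hpos k hk, hs]
      · rw [iterate_succ_apply']
        exact (log_neg hs hlt).le
    rw [superlog, hheight, iterate_succ_apply', exp_log hs, glue_of_nonneg hs.le]
    push_cast
    ring

lemma superlog_eventuallyEq (t : ℝ) :
    superlog =ᶠ[𝓝 t] fun x => glue (log^[logHeight t] x) + logHeight t - 1 := by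
  have hcont {k : ℕ} (hk : k ≤ logHeight t) : ContinuousAt (log^[k]) t :=
    (contDiffAt_iterate_log (m := 0) fun j hj =>
      (iterate_log_pos_of_lt_logHeight (hj.trans_le hk)).ne').continuousAt
  have hpos : ∀ᶠ x in 𝓝 t, ∀ k ∈ Finset.range (logHeight t), 0 < log^[k] x := by
    rw [eventually_all_finset]
    intro k hk
    have hk := Finset.mem_range.1 hk
    exact continuousAt_const.eventually_lt (hcont hk.le) (iterate_log_pos_of_lt_logHeight hk)
  have hlt : ∀ᶠ x in 𝓝 t, log^[logHeight t] x < 1 :=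
    (hcont le_rfl).eventually_lt continuousAt_const
      ((iterate_log_logHeight_nonpos t).trans_lt one_pos)
  filter_upwards [hpos, hlt] with x hxpos hxlt
  exact superlog_eq_glue_iterate_log (fun k hk => hxpos k (Finset.mem_range.2 hk)) hxlt

lemma contDiff_superlog : ContDiff ℝ 1 superlog := by
  refine contDiff_iff_contDiffAt.2 fun t => ContDiffAt.congr_of_eventuallyEq ?_
    (superlog_eventuallyEq t)
  have hlog : ContDiffAt ℝ 1 (log^[logHeight t]) t :=
    contDiffAt_iterate_log fun k hk => (iterate_log_pos_of_lt_logHeight hk).ne'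
  exact ((contDiff_glue.contDiffAt.comp t hlog).add contDiffAt_const).sub contDiffAt_const

lemma hasDerivAt_superlog (t : ℝ) :
    HasDerivAt superlog (exp (min (log^[logHeight t] t) 0) *
      ∏ k ∈ Finset.range (logHeight t), (log^[k] t)⁻¹) t := by
  have hlog := hasDerivAt_iterate_log (t := t) fun k hk =>
    (iterate_log_pos_of_lt_logHeight hk).ne'
  exact ((((hasDerivAt_glue _).comp t hlog).add_const _).sub_const _).congr_of_eventuallyEq
    (superlog_eventuallyEq t)

lemma strictMono_superlog : StrictMono superlog :=
  strictMono_of_hasDerivAt_pos hasDerivAt_superlog fun _ =>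
    mul_pos (exp_pos _) (Finset.prod_pos fun _ hk =>
      inv_pos.2 (iterate_log_pos_of_lt_logHeight (Finset.mem_range.1 hk)))

lemma range_superlog : Set.range superlog = Set.Ioi (-2) := by
  refine Set.Subset.antisymm (Set.range_subset_iff.2 neg_two_lt_superlog) fun y hy => ?_
  have hy : 0 < y + 2 := by linarith [Set.mem_Ioi.1 hy]
  refine mem_range_of_exists_le_of_exists_ge contDiff_superlog.continuous ?_ ?_
  · refine ⟨min (log (y + 2)) 0, ?_⟩
    rw [superlog_of_nonpos (min_le_right _ _)]
    linarith [exp_le_exp.2 (min_le_left (log (y + 2)) 0), exp_log hy]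
  · obtain ⟨m, hm⟩ := exists_nat_ge y
    exact ⟨exp^[m] 1, by rwa [superlog_iterate_exp_one]⟩

end Superlog

open Superlog in
/-- There exists a continuously differentiable super-logarithm: a strictly
increasing `C¹` function `A : ℝ → ℝ` with range `(-2, ∞)`, `A 1 = 0`, and the
Abel functional equation `A (exp t) = A t + 1`. -/
theorem exists_C1_superlogarithm :
    ∃ A : ℝ → ℝ,
      ContDiff ℝ 1 A ∧
      StrictMono A ∧
      Set.range A = Set.Ioi (-2 : ℝ) ∧
      A 1 = 0 ∧
      (∀ t : ℝ, A (Real.exp t) = A t + 1) :=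
  ⟨superlog, contDiff_superlog, strictMono_superlog, range_superlog, superlog_one, superlog_exp⟩
end

section
/- Let T > −2 and let F be differentiable on (−2, ∞) with exp(F(t)) = F(t+1) for all t > −2. If F'(t) > 0 for all t ≥ T, then F'(t) > 0 for all t > −2. -/
/-!
Differentiating `exp ∘ F = F (· + 1)` gives `F' (t + 1) = exp (F t) · F' t`, and `exp (F t) > 0`,
so positivity of `F'` at `t + 1` forces it at `t`. Every `t > -2` reaches `[T, ∞)` after finitely
many unit steps, each staying inside the domain.
-/

open Filter Topology

theorem deriv_add_one_eq_exp_mul_deriv {F : ℝ → ℝ} {t : ℝ} (hF : DifferentiableAt ℝ F t)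
    (hfe : (fun s => Real.exp (F s)) =ᶠ[𝓝 t] fun s => F (s + 1)) :
    deriv F (t + 1) = Real.exp (F t) * deriv F t := by
  rw [← deriv_comp_add_const, ← hfe.deriv_eq, hF.hasDerivAt.exp.deriv, mul_comm]

theorem forall_gt_of_forall_ge_of_add_one {P : ℝ → Prop} {a T : ℝ} (hge : ∀ t, T ≤ t → P t)
    (hstep : ∀ t, a < t → P (t + 1) → P t) : ∀ t, a < t → P t := by
  suffices h : ∀ n : ℕ, ∀ t, a < t → T ≤ t + n → P t by
    intro t ht
    obtain ⟨n, hn⟩ := exists_nat_ge (T - t)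
    exact h n t ht (by linarith)
  intro n
  induction n with
  | zero => exact fun t _ h => hge t (by simpa using h)
  | succ n ih =>
    intro t ht h
    exact hstep t ht (ih (t + 1) (by linarith) (by push_cast at h; linarith))

theorem tetration_deriv_pos_descent_general (T : ℝ) (F : ℝ → ℝ)
    (hdiff : ∀ t : ℝ, -2 < t → DifferentiableAt ℝ F t)
    (hfe : ∀ t : ℝ, -2 < t → Real.exp (F t) = F (t + 1))
    (hpos : ∀ t : ℝ, T ≤ t → 0 < deriv F t) :
    ∀ t : ℝ, -2 < t → 0 < deriv F t := by
  refine forall_gt_of_forall_ge_of_add_one hpos fun t ht hpos₁ => ?_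
  have hfe_near : (fun s => Real.exp (F s)) =ᶠ[𝓝 t] fun s => F (s + 1) :=
    eventually_gt_nhds ht |>.mono hfe
  rw [deriv_add_one_eq_exp_mul_deriv (hdiff t ht) hfe_near] at hpos₁
  exact (mul_pos_iff_of_pos_left (Real.exp_pos _)).1 hpos₁

/-- Infinite descent of positivity of the derivative for a differentiable
solution of the tetration equation `exp (F t) = F (t+1)` on `(-2, ∞)`: if the
derivative is positive from some point `T` on, it is positive everywhere. -/
theorem tetration_deriv_pos_descent (T : ℝ) (hT : -2 < T) (F : ℝ → ℝ)
    (hdiff : ∀ t : ℝ, -2 < t → DifferentiableAt ℝ F t)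
    (hfe : ∀ t : ℝ, -2 < t → Real.exp (F t) = F (t + 1))
    (hpos : ∀ t : ℝ, T ≤ t → 0 < deriv F t) :
    ∀ t : ℝ, -2 < t → 0 < deriv F t :=
  tetration_deriv_pos_descent_general T F hdiff hfe hpos
end

section
/- Let k ≥ 1 and let F_1, …, F_k : ℝ → ℝ be functions such that F_1 = exp, each F_i is injective, F_i(0) = 1 for all 1 ≤ i ≤ k, and for each 2 ≤ i ≤ k the functional equation F_i(x+1) = F_{i−1}(F_i(x)) holds for all x > −i. Then F_k(−j) = 1 − j for every integer j with 0 ≤ j ≤ k − 1. -/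
/-!
Induction on the level `i` and then on `j`. Writing `f = F i`, `g = F (i - 1)`, the functional
equation at `x = -(j + 1)` gives `g (f (-(j + 1))) = f (-j) = 1 - j = g (-j)`, the last two
equalities by the inner and outer induction hypotheses, and injectivity of `g` yields
`f (-(j + 1)) = -j`.
-/

open Function

lemma eq_add_one_of_comp_eq_of_injective {f g : ℝ → ℝ} {x : ℝ} (hg : Injective g)
    (hrec : f (x + 1) = g (f x)) (hfg : f (x + 1) = g (x + 1)) : f x = x + 1 :=
  hg (hrec ▸ hfg)

lemma apply_neg_natCast_of_succ {f g : ℝ → ℝ} {n : ℕ} (hg : Injective g) (hf0 : f 0 = 1)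
    (hrec : ∀ x : ℝ, -((n + 1 : ℕ) : ℝ) < x → f (x + 1) = g (f x))
    (hgval : ∀ j : ℕ, j < n → g (-(j : ℝ)) = 1 - j) :
    ∀ j : ℕ, j < n + 1 → f (-(j : ℝ)) = 1 - j := by
  intro j hj
  induction j with
  | zero => simpa using hf0
  | succ m ih =>
    have hx : -((n + 1 : ℕ) : ℝ) < -((m + 1 : ℕ) : ℝ) := by
      have : (m : ℝ) < n := by exact_mod_cast Nat.succ_lt_succ_iff.1 hj
      push_cast
      linarith
    have hshift : -((m + 1 : ℕ) : ℝ) + 1 = -(m : ℝ) := by push_cast; ring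
    have hfg : f (-((m + 1 : ℕ) : ℝ) + 1) = g (-((m + 1 : ℕ) : ℝ) + 1) := by
      rw [hshift, ih (by omega), hgval m (by omega)]
    rw [eq_add_one_of_comp_eq_of_injective hg (hrec _ hx) hfg, hshift]
    push_cast
    ring

theorem hyperoperation_successorship_general (k : ℕ) (hk : 1 ≤ k)
    (F : ℕ → ℝ → ℝ)
    (hinj : ∀ i : ℕ, 1 ≤ i → i ≤ k → Function.Injective (F i))
    (hnorm : ∀ i : ℕ, 1 ≤ i → i ≤ k → F i 0 = 1)
    (hrec : ∀ i : ℕ, 2 ≤ i → i ≤ k → ∀ x : ℝ, -(i : ℝ) < x →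
      F i (x + 1) = F (i - 1) (F i x)) :
    ∀ j : ℕ, j ≤ k - 1 → F k (-(j : ℝ)) = 1 - (j : ℝ) := by
  have levels : ∀ i, 1 ≤ i → i ≤ k → ∀ j : ℕ, j < i → F i (-(j : ℝ)) = 1 - j := by
    intro i hi
    induction i, hi using Nat.le_induction with
    | base =>
      intro _ j hj
      obtain rfl : j = 0 := by omega
      simpa using hnorm 1 le_rfl hk
    | succ n hn ih =>
      intro hnk
      refine apply_neg_natCast_of_succ (hinj n hn (by omega)) (hnorm (n + 1) (by omega) hnk)
        (fun x hx => ?_) (ih (by omega))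
      simpa using hrec (n + 1) (by omega) hnk x hx
  intro j hj
  exact levels k hk le_rfl j (by omega)

/-- Successorship of normalized hyper-operations: if `F 1 = exp`, each `F i`
(`1 ≤ i ≤ k`) is injective with `F i 0 = 1`, and `F i (x+1) = F (i-1) (F i x)`
for `x > -i` (`2 ≤ i ≤ k`), then `F k (-j) = 1 - j` for `0 ≤ j ≤ k - 1`. -/
theorem hyperoperation_successorship (k : ℕ) (hk : 1 ≤ k)
    (F : ℕ → ℝ → ℝ)
    (hF1 : F 1 = Real.exp)
    (hinj : ∀ i : ℕ, 1 ≤ i → i ≤ k → Function.Injective (F i))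
    (hnorm : ∀ i : ℕ, 1 ≤ i → i ≤ k → F i 0 = 1)
    (hrec : ∀ i : ℕ, 2 ≤ i → i ≤ k → ∀ x : ℝ, -(i : ℝ) < x →
      F i (x + 1) = F (i - 1) (F i x)) :
    ∀ j : ℕ, j ≤ k - 1 → F k (-(j : ℝ)) = 1 - (j : ℝ) :=
  hyperoperation_successorship_general k hk F hinj hnorm hrec
end

section
/- Let a ∈ ℝ, let G : ℝ → ℝ be differentiable with G'(x) > 0 for all x ∈ ℝ, and let H be differentiable on (a, ∞) with H(t+1) = G(H(t)) for all t > a. If there is T > a such that H'(t) > 0 for all t ≥ T, then H'(t) > 0 for all t > a. -/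
/-!
Differentiating the recursion gives `H' (t + 1) = G' (H t) * H' t`. Since `G' > 0`, positivity of
`H'` at `t + 1` descends to `t`, and finitely many unit steps lead from any `t > a` into `[T, ∞)`.
-/

open Filter Set Topology

theorem forall_of_shift_descent {a T c : ℝ} {P : ℝ → Prop} (hc : 0 < c)
    (hstep : ∀ t, a < t → P (t + c) → P t) (hT : ∀ t, T ≤ t → P t) :
    ∀ t, a < t → P t := by
  have descent : ∀ n : ℕ, ∀ t, a < t → T ≤ t + n • c → P t := by
    intro n
    induction n with
    | zero => exact fun t _ hle => hT t (by simpa using hle)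
    | succ n ih =>
      intro t ht hle
      refine hstep t ht (ih (t + c) (by linarith) ?_)
      rw [succ_nsmul] at hle
      linarith
  intro t ht
  obtain ⟨n, hn⟩ := Archimedean.arch (T - t) hc
  exact descent n t ht (by linarith)

theorem deriv_add_const_eq_mul_of_eventuallyEq_comp {G H : ℝ → ℝ} {c t : ℝ}
    (hrec : (fun s => H (s + c)) =ᶠ[𝓝 t] fun s => G (H s))
    (hG : DifferentiableAt ℝ G (H t)) (hH : DifferentiableAt ℝ H t) :
    deriv H (t + c) = deriv G (H t) * deriv H t := by
  rw [← deriv_comp_add_const, hrec.deriv_eq]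
  exact deriv_comp t hG hH

theorem deriv_pos_descent_general (a : ℝ) (G H : ℝ → ℝ)
    (hG_pos : ∀ x : ℝ, 0 < deriv G x)
    (hH_diff : ∀ t : ℝ, a < t → DifferentiableAt ℝ H t)
    (hrec : ∀ t : ℝ, a < t → H (t + 1) = G (H t))
    (hT : ∃ T : ℝ, a < T ∧ ∀ t : ℝ, T ≤ t → 0 < deriv H t) :
    ∀ t : ℝ, a < t → 0 < deriv H t := by
  obtain ⟨T, -, hTpos⟩ := hT
  refine forall_of_shift_descent one_pos (fun t ht hpos => ?_) hTpos
  have hrec_near : (fun s => H (s + 1)) =ᶠ[𝓝 t] fun s => G (H s) :=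
    eventually_of_mem (Ioi_mem_nhds ht) hrec
  have hG : DifferentiableAt ℝ G (H t) := differentiableAt_of_deriv_ne_zero (hG_pos _).ne'
  rw [deriv_add_const_eq_mul_of_eventuallyEq_comp hrec_near hG (hH_diff t ht)] at hpos
  exact pos_of_mul_pos_right hpos (hG_pos _).le

/-- Infinite descent of positivity of the derivative: if `H (t+1) = G (H t)`
on `(a, ∞)` with `G` everywhere differentiable with positive derivative, `H`
differentiable on `(a, ∞)`, and `H' > 0` from some `T > a` on, then `H' > 0`
on all of `(a, ∞)`. -/
theorem deriv_pos_descent (a : ℝ) (G H : ℝ → ℝ)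
    (hG_diff : Differentiable ℝ G)
    (hG_pos : ∀ x : ℝ, 0 < deriv G x)
    (hH_diff : ∀ t : ℝ, a < t → DifferentiableAt ℝ H t)
    (hrec : ∀ t : ℝ, a < t → H (t + 1) = G (H t))
    (hT : ∃ T : ℝ, a < T ∧ ∀ t : ℝ, T ≤ t → 0 < deriv H t) :
    ∀ t : ℝ, a < t → 0 < deriv H t :=
  deriv_pos_descent_general a G H hG_pos hH_diff hrec hT
end
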